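/- Let m be an even positive integer, p a prime with p ≡ 1 (mod m), ω a primitive root mod p, and C_s = ω^s·{m-th powers in F_p*}. Let S ⊆ {0,...,m−1} with |S| = m/2, D = ∪_{s∈S} C_s, and f(z) = ∑_{j=0}^{p−1} 𝟙_D(j) z^j where 𝟙_D(j) = 1 if j ∈ D and −1 otherwise. Let χ be a multiplicative character of F_p of order m. Then for every integer k, f(e^{2πik/p}) = (2/m) ∑_{j=1}^{m−1} G(χ^j) · conj(χ^j(k)) · ∑_{s∈S} conj(χ^j(ω^s)) − 1. -/

import Mathlib

open scoped Classical

/-- The additive character `y ↦ e^{2πiy/p}` of `F_p = ZMod p`. -/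
noncomputable def eP (p : ℕ) (y : ZMod p) : ℂ :=
  Complex.exp (2 * Real.pi * Complex.I * (y.val : ℂ) / p)

/-- The Gauss sum `G(χ) = ∑_{y ∈ F_p*} χ(y) e^{2πiy/p}`. -/
noncomputable def gaussP (p : ℕ) [NeZero p] (χ : MulChar (ZMod p) ℂ) : ℂ :=
  ∑ y ∈ Finset.univ.filter (fun y : ZMod p => y ≠ 0), χ y * eP p y

/-!
Let `ψ = ZMod.stdAddChar` and `ε(x) = ±1` according as `x ∈ D`, so that
`f(e^{2πik/p}) = ∑ₓ ε(x) ψ(kx)`. Since `ω` generates `F_p*`, the kernel of `χ` is the group of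
`m`-th powers, so `x ∈ C_s` iff `χ x = χ (ω^s)`; orthogonality of the powers of `χ` then expands
`ε(x)` as `(2/m) ∑_{j=1}^{m-1} (∑_{s∈S} conj(χ^j(ω^s))) χ^j(x)` for `x ≠ 0`, the `j = 0` term
cancelling the `-1` because `|S| = m/2`. Summing against `ψ(kx)` turns each `χ^j` into
`conj(χ^j(k)) G(χ^j)`, and the term `x = 0` gives the final `-1`.
-/

open Finset

namespace MulChar

variable {F : Type*} [Field F]

section MonoidWithZero

variable {R : Type*} [CommMonoidWithZero R] (χ : MulChar F R)

lemma pow_apply_of_ne_zero (n : ℕ) {a : F} (ha : a ≠ 0) :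
    (χ ^ n) a = χ a ^ n :=
  pow_apply_coe χ n (Units.mk0 a ha)

lemma apply_pow_orderOf {a : F} (ha : a ≠ 0) : χ a ^ orderOf χ = 1 := by
  rw [← pow_apply_of_ne_zero χ _ ha, pow_orderOf_eq_one, one_apply (isUnit_iff_ne_zero.mpr ha)]

lemma orderOf_apply_of_generator {ω : F}
    (hω : ∀ x : F, x ≠ 0 → ∃ j : ℕ, ω ^ j = x) (hω0 : ω ≠ 0) :
    orderOf (χ ω) = orderOf χ := by
  refine (orderOf_eq_orderOf_iff.mpr fun n => ⟨fun h => ?_, fun h => ?_⟩).symm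
  · rw [← pow_apply_of_ne_zero χ n hω0, h, one_apply (isUnit_iff_ne_zero.mpr hω0)]
  · ext a
    obtain ⟨j, hj⟩ := hω a a.ne_zero
    rw [pow_apply_coe, one_apply_coe, ← hj, map_pow, ← pow_mul, mul_comm, pow_mul, h, one_pow]

end MonoidWithZero

section Field

variable {R : Type*} [Field R] (χ : MulChar F R)

lemma sum_range_orderOf_pow_apply {a : F} (ha : a ≠ 0) :
    ∑ j ∈ range (orderOf χ), (χ ^ j) a = if χ a = 1 then (orderOf χ : R) else 0 := by
  simp_rw [pow_apply_of_ne_zero χ _ ha]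
  split_ifs with h
  · simp [h]
  · rw [geom_sum_eq h, apply_pow_orderOf χ ha, sub_self, zero_div]

/-- The kernel of `χ` is exactly the subgroup of `orderOf χ`-th powers. -/
lemma exists_eq_mul_pow_orderOf_iff [Finite F] {ω : F}
    (hω : ∀ x : F, x ≠ 0 → ∃ j : ℕ, ω ^ j = x) (hω0 : ω ≠ 0) {x : F} (hx : x ≠ 0) (s : ℕ) :
    (∃ y : F, y ≠ 0 ∧ x = ω ^ s * y ^ orderOf χ) ↔ χ x = χ (ω ^ s) := by
  constructor
  · rintro ⟨y, hy, rfl⟩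
    rw [map_mul, map_pow χ y, apply_pow_orderOf χ hy, mul_one]
  · obtain ⟨a, rfl⟩ := hω x hx
    intro h
    rw [map_pow, map_pow] at h
    have hfin : IsOfFinOrder (χ ω) := by
      rw [← orderOf_pos_iff, orderOf_apply_of_generator χ hω hω0]
      exact orderOf_pos χ
    rw [hfin.pow_eq_pow_iff_modEq, orderOf_apply_of_generator χ hω hω0,
      Nat.modEq_iff_dvd] at h
    obtain ⟨t, ht⟩ := h
    refine ⟨ω ^ (-t), zpow_ne_zero _ hω0, ?_⟩
    rw [← zpow_natCast, ← zpow_natCast ω s, ← zpow_natCast (ω ^ (-t)), ← zpow_mul,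
      ← zpow_add₀ hω0]
    congr 1
    linarith

end Field

section Complex

variable [Finite F] (χ : MulChar F ℂ)

lemma conj_apply_mul_apply (a b : F) : starRingEnd ℂ (χ b) * χ a = χ (b⁻¹ * a) := by
  rw [starRingEnd_apply, star_apply', inv_apply', map_mul]

lemma sum_range_orderOf_conj_mul_apply {a b : F} (ha : a ≠ 0) (hb : b ≠ 0) :
    ∑ j ∈ range (orderOf χ), starRingEnd ℂ ((χ ^ j) b) * (χ ^ j) a
      = if χ a = χ b then (orderOf χ : ℂ) else 0 := by
  simp_rw [conj_apply_mul_apply]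
  rw [sum_range_orderOf_pow_apply χ (mul_ne_zero (inv_ne_zero hb) ha), map_mul, ← inv_apply',
    inv_apply_eq_inv', inv_mul_eq_one₀ ((isUnit_iff_ne_zero.mpr hb).map χ).ne_zero,
    @eq_comm _ (χ b)]

section Cyclotomy

variable {ω : F} (hω : ∀ x : F, x ≠ 0 → ∃ j : ℕ, ω ^ j = x) (hω0 : ω ≠ 0)
  {S : Finset ℕ} (hS : S ⊆ range (orderOf χ)) [DecidableEq F] {D : Finset F}
  (hD : ∀ x : F, x ∈ D ↔ ∃ s ∈ S, ∃ y : F, y ≠ 0 ∧ x = ω ^ s * y ^ orderOf χ)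
include hω hω0 hS hD

lemma card_filter_apply_eq_apply_pow_eq_ite_mem {x : F} (hx : x ≠ 0) :
    #{s ∈ S | χ x = χ (ω ^ s)} = if x ∈ D then 1 else 0 := by
  have hinj : Set.InjOn (fun s => χ (ω ^ s)) S := by
    intro s hs t ht hst
    simp only [map_pow] at hst
    refine pow_injOn_Iio_orderOf ?_ ?_ hst <;>
      simpa [orderOf_apply_of_generator χ hω hω0] using hS ‹_›
  have hle : #{s ∈ S | χ x = χ (ω ^ s)} ≤ 1 :=
    card_le_one.mpr fun s hs t ht =>
      hinj (mem_filter.mp hs).1 (mem_filter.mp ht).1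
        ((mem_filter.mp hs).2.symm.trans (mem_filter.mp ht).2)
  simp_rw [hD, exists_eq_mul_pow_orderOf_iff χ hω hω0 hx]
  split_ifs with h
  · obtain ⟨s, hs, hxs⟩ := h
    have : 0 < #{s ∈ S | χ x = χ (ω ^ s)} := card_pos.mpr ⟨s, mem_filter.mpr ⟨hs, hxs⟩⟩
    omega
  · exact card_eq_zero.mpr (filter_eq_empty_iff.mpr fun s hs hxs => h ⟨s, hs, hxs⟩)

lemma sum_range_orderOf_sum_conj_mul_apply {x : F} (hx : x ≠ 0) :
    ∑ j ∈ range (orderOf χ), (∑ s ∈ S, starRingEnd ℂ ((χ ^ j) (ω ^ s))) * (χ ^ j) x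
      = if x ∈ D then (orderOf χ : ℂ) else 0 := by
  simp_rw [sum_mul]
  rw [sum_comm]
  simp_rw [sum_range_orderOf_conj_mul_apply χ hx (pow_ne_zero _ hω0)]
  rw [← sum_filter, sum_const, nsmul_eq_mul,
    card_filter_apply_eq_apply_pow_eq_ite_mem χ hω hω0 hS hD hx]
  split_ifs <;> simp

/-- At `x = 0` every `χ ^ j` vanishes, including `χ ^ 0 = 1`: the trivial `MulChar` is `0` at
non-units. -/
lemma ite_mem_eq_sum_Icc (hScard : 2 * #S = orderOf χ) (x : F) :
    (if x ∈ D then (1 : ℂ) else -1)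
      = 2 / (orderOf χ : ℂ) * ∑ j ∈ Icc 1 (orderOf χ - 1),
          (∑ s ∈ S, starRingEnd ℂ ((χ ^ j) (ω ^ s))) * (χ ^ j) x
        - if x = 0 then 1 else 0 := by
  have hm : 0 < orderOf χ := orderOf_pos χ
  by_cases hx : x = 0
  · have h0 : (0 : F) ∉ D := by
      rw [hD]
      rintro ⟨s, -, y, hy, h⟩
      exact mul_ne_zero (pow_ne_zero _ hω0) (pow_ne_zero _ hy) h.symm
    simp [hx, h0]
  · have h := sum_range_orderOf_sum_conj_mul_apply χ hω hω0 hS hD hx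
    have hIcc : Icc 1 (orderOf χ - 1) = Ico 1 (orderOf χ) := by ext; simp; omega
    rw [range_eq_Ico, sum_eq_sum_Ico_succ_bot hm, ← hIcc] at h
    have hc0 : ∑ s ∈ S, starRingEnd ℂ ((1 : MulChar F ℂ) (ω ^ s)) = #S := by
      simp [one_apply (isUnit_iff_ne_zero.mpr (pow_ne_zero _ hω0))]
    rw [pow_zero, one_apply (isUnit_iff_ne_zero.mpr hx), mul_one, hc0] at h
    have hmC : (orderOf χ : ℂ) = 2 * #S := by exact_mod_cast hScard.symm
    rw [if_neg hx, sub_zero, eq_sub_of_add_eq' h, hmC]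
    have hS0 : (#S : ℂ) ≠ 0 := Nat.cast_ne_zero.mpr (by omega)
    split_ifs <;> field_simp <;> ring

end Cyclotomy

end Complex

section GaussSum

variable [Fintype F]

lemma sum_apply_mul_addChar_mul {χ : MulChar F ℂ} (hχ : χ ≠ 1) (ψ : AddChar F ℂ) (k : F) :
    ∑ x, χ x * ψ (k * x) = starRingEnd ℂ (χ k) * gaussSum χ ψ := by
  by_cases hk : k = 0
  · simp [hk, sum_eq_zero_of_ne_one hχ]
  · rw [starRingEnd_apply, star_apply', ← Units.val_mk0 hk, ← gaussSum_mulShift_eq]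
    simp [gaussSum, AddChar.mulShift_apply]

lemma sum_sum_mul_pow_apply_mul_addChar (χ : MulChar F ℂ) {J : Finset ℕ}
    (hJ : ∀ j ∈ J, χ ^ j ≠ 1) (c : ℕ → ℂ) (ψ : AddChar F ℂ) (k : F) :
    ∑ x, (∑ j ∈ J, c j * (χ ^ j) x) * ψ (k * x)
      = ∑ j ∈ J, gaussSum (χ ^ j) ψ * starRingEnd ℂ ((χ ^ j) k) * c j := by
  simp_rw [sum_mul, mul_assoc]
  rw [sum_comm]
  refine sum_congr rfl fun j hj => ?_
  rw [← mul_sum, sum_apply_mul_addChar_mul (hJ j hj)]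
  ring

end GaussSum

end MulChar

lemma ne_zero_of_forall_exists_pow_eq {F : Type*} [Field F] (h : (-1 : F) ≠ 1) {ω : F}
    (hω : ∀ x : F, x ≠ 0 → ∃ j : ℕ, ω ^ j = x) : ω ≠ 0 := by
  have hneg : (-1 : F) ≠ 0 := neg_ne_zero.mpr one_ne_zero
  rintro rfl
  obtain ⟨_ | j, hj⟩ := hω (-1) hneg
  · exact h (by simpa using hj.symm)
  · exact hneg (by simpa using hj.symm)

lemma eP_eq_stdAddChar (p : ℕ) [NeZero p] (y : ZMod p) : eP p y = ZMod.stdAddChar y := by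
  rw [eP, ZMod.stdAddChar_apply, ZMod.toCircle_apply]

lemma gaussP_eq_gaussSum (p : ℕ) [Fact p.Prime] (χ : MulChar (ZMod p) ℂ) :
    gaussP p χ = gaussSum χ ZMod.stdAddChar := by
  rw [gaussP, gaussSum, ← sum_filter_add_sum_filter_not univ (fun y : ZMod p => y ≠ 0)]
  simp [eP_eq_stdAddChar, filter_eq', MulChar.map_zero]

lemma sum_range_mul_exp_pow (N : ℕ) [NeZero N] (g : ZMod N → ℂ) (k : ℤ) :
    ∑ j ∈ range N, g j * Complex.exp (2 * Real.pi * Complex.I * k / N) ^ j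
      = ∑ x, g x * ZMod.stdAddChar ((k : ZMod N) * x) := by
  have hexp (j : ℕ) : Complex.exp (2 * Real.pi * Complex.I * k / N) ^ j
      = ZMod.stdAddChar ((k : ZMod N) * (j : ZMod N)) := by
    rw [← Complex.exp_nat_mul,
      show (k : ZMod N) * (j : ZMod N) = ((k * j : ℤ) : ZMod N) by push_cast; rfl,
      ZMod.stdAddChar_coe]
    push_cast
    ring_nf
  simp_rw [hexp]
  refine sum_nbij' (fun j => (j : ZMod N)) ZMod.val (by simp) (by simp [ZMod.val_lt])
    (fun j hj => ZMod.val_natCast_of_lt (mem_range.mp hj)) (fun x _ => ZMod.natCast_zmod_val x)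
    (fun _ _ => rfl)

theorem cyclotomic_poly_values_general (m p : ℕ) [Fact p.Prime] (hm : Even m)
    (hpm : p ≡ 1 [MOD m])
    (ω : ZMod p) (hω : ∀ x : ZMod p, x ≠ 0 → ∃ j : ℕ, ω ^ j = x)
    (S : Finset ℕ) (hS : S ⊆ Finset.range m) (hScard : 2 * S.card = m)
    (D : Finset (ZMod p))
    (hD : ∀ x : ZMod p, x ∈ D ↔ ∃ s ∈ S, ∃ y : ZMod p, y ≠ 0 ∧ x = ω ^ s * y ^ m)
    (χ : MulChar (ZMod p) ℂ) (hχ : orderOf χ = m)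
    (f : ℂ → ℂ)
    (hf : ∀ z : ℂ, f z =
      ∑ j ∈ Finset.range p, (if (j : ZMod p) ∈ D then (1 : ℂ) else -1) * z ^ j) :
    ∀ k : ℤ,
      f (Complex.exp (2 * Real.pi * Complex.I * (k : ℂ) / p))
        = (2 / (m : ℂ)) * ∑ j ∈ Finset.Icc 1 (m - 1),
            gaussP p (χ ^ j) * (starRingEnd ℂ) ((χ ^ j) (k : ZMod p)) *
              (∑ s ∈ S, (starRingEnd ℂ) ((χ ^ j) (ω ^ s)))
          - 1 := by
  intro k
  subst hχ
  have hp_odd : p % 2 = 1 := by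
    rw [← Nat.mod_mod_of_dvd p hm.two_dvd, hpm, Nat.mod_mod_of_dvd 1 hm.two_dvd]
    rfl
  have : Fact (2 < p) := ⟨by have := (Fact.out : p.Prime).two_le; omega⟩
  have hω0 : ω ≠ 0 := ne_zero_of_forall_exists_pow_eq ZMod.neg_one_ne_one hω
  have hsign := MulChar.ite_mem_eq_sum_Icc χ hω hω0 hS hD hScard
  have hJ (j : ℕ) (hj : j ∈ Icc 1 (orderOf χ - 1)) : χ ^ j ≠ 1 := by
    obtain ⟨hj1, hj2⟩ := mem_Icc.mp hj
    exact pow_ne_one_of_lt_orderOf (by omega) (by omega)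
  rw [hf, sum_range_mul_exp_pow p (fun x => if x ∈ D then 1 else -1)]
  simp_rw [hsign, sub_mul, sum_sub_distrib, ite_mul, one_mul, zero_mul, sum_ite_eq',
    if_pos (mem_univ _), mul_zero, AddChar.map_zero_eq_one, mul_assoc, ← mul_sum]
  rw [MulChar.sum_sum_mul_pow_apply_mul_addChar χ hJ
    (fun j => ∑ s ∈ S, starRingEnd ℂ ((χ ^ j) (ω ^ s)))]
  simp_rw [gaussP_eq_gaussSum, mul_assoc]

/-- Evaluation at `p`-th roots of unity of the characteristic polynomial of a union `D` of
`m/2` cyclotomic classes of order `m`: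
`f(e^{2πik/p}) = (2/m) ∑_{j=1}^{m-1} G(χ^j) conj(χ^j(k)) ∑_{s∈S} conj(χ^j(ω^s)) - 1`. -/
theorem cyclotomic_poly_values (m p : ℕ) [Fact p.Prime] (hm : Even m) (hm0 : 0 < m)
    (hpm : p ≡ 1 [MOD m])
    (ω : ZMod p) (hω : ∀ x : ZMod p, x ≠ 0 → ∃ j : ℕ, ω ^ j = x)
    (S : Finset ℕ) (hS : S ⊆ Finset.range m) (hScard : 2 * S.card = m)
    (D : Finset (ZMod p))
    (hD : ∀ x : ZMod p, x ∈ D ↔ ∃ s ∈ S, ∃ y : ZMod p, y ≠ 0 ∧ x = ω ^ s * y ^ m)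
    (χ : MulChar (ZMod p) ℂ) (hχ : orderOf χ = m)
    (f : ℂ → ℂ)
    (hf : ∀ z : ℂ, f z =
      ∑ j ∈ Finset.range p, (if (j : ZMod p) ∈ D then (1 : ℂ) else -1) * z ^ j) :
    ∀ k : ℤ,
      f (Complex.exp (2 * Real.pi * Complex.I * (k : ℂ) / p))
        = (2 / (m : ℂ)) * ∑ j ∈ Finset.Icc 1 (m - 1),
            gaussP p (χ ^ j) * (starRingEnd ℂ) ((χ ^ j) (k : ZMod p)) *
              (∑ s ∈ S, (starRingEnd ℂ) ((χ ^ j) (ω ^ s)))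
          - 1 :=
  cyclotomic_poly_values_general m p hm hpm ω hω S hS hScard D hD χ hχ f hf
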